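/- Let (a, b) be a pair of Δ_C-valued random vectors with E[a | b] = (M^0)'b almost surely, where M^0 is a row-stochastic C×C matrix with all entries strictly positive, and suppose that for every i ∈ {1,…,C} and every ε > 0, P(b_i ≥ 1 − ε) > 0 (Assumption 1). Then M^0 is the unique minimizer of the population labeled loss: for every row-stochastic C×C matrix M with M ≠ M^0, E[D_KL(a ‖ M'b)] > E[D_KL(a ‖ (M^0)'b)], as elements of [0,∞]. -/

import Mathlib

/-!
Write `q₀ = (M⁰)'b` and `q = M'b`. If `E[KL(a ‖ q)]` is finite then `a ≪ q` almost surely, and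
since `E[a | b] = q₀` is bounded below by some `δ > 0`, this forces `q > 0` almost surely. Then
`KL(a ‖ q) - KL(a ‖ q₀) = Σⱼ aⱼ log (q₀ⱼ / qⱼ)` is linear in `a`, so by the tower property its
expectation is `E[KL(q₀ ‖ q)] ≥ 0` (Gibbs). Equality would force `q₀ = q` almost surely. By
Assumption 1 such `b` exist arbitrarily close to every vertex `eᵢ`, and at `eᵢ` the vectors
`M'b` and `(M⁰)'b` are the `i`-th rows of `M` and `M⁰`, so `M = M⁰`.
-/

open MeasureTheory ProbabilityTheory Filter Finset
open scoped ENNReal NNReal BigOperators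

noncomputable section

namespace GBQL

/-- The probability simplex Δ_C in ℝ^C. -/
def simplex (C : ℕ) : Set (Fin C → ℝ) :=
  {x | (∀ i, 0 ≤ x i) ∧ ∑ i, x i = 1}

/-- A C×C matrix (as a function) is row-stochastic. -/
def rowStochastic {C : ℕ} (M : Fin C → Fin C → ℝ) : Prop :=
  (∀ i j, 0 ≤ M i j) ∧ ∀ i, ∑ j, M i j = 1

/-- M' x, the transpose of M applied to x : (M'x)_j = Σ_i M_{ij} x_i. -/
def mtv {C : ℕ} (M : Fin C → Fin C → ℝ) (x : Fin C → ℝ) : Fin C → ℝ :=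
  fun j => ∑ i, M i j * x i

open scoped Classical in
/-- Kullback–Leibler divergence D_KL(p‖q) = Σ_j p_j log(p_j/q_j) as an element of [0,∞],
with conventions 0·log(0/x) = 0 and p_j log(p_j/0) = ∞ for p_j > 0. -/
def klDiv {C : ℕ} (p q : Fin C → ℝ) : ℝ≥0∞ :=
  if ∃ j, 0 < p j ∧ q j = 0 then ⊤
  else ENNReal.ofReal (∑ j, if p j = 0 then 0 else p j * Real.log (p j / q j))

/-- Real-valued Kullback–Leibler divergence (agreeing with `klDiv` whenever `q` has
strictly positive entries). -/
def klReal {C : ℕ} (p q : Fin C → ℝ) : ℝ :=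
  ∑ j, if p j = 0 then 0 else p j * Real.log (p j / q j)

/-- Completion of a C×(C−1) matrix M̃ to a C×C matrix M with M_{iC} = 1 − Σ_{j<C} M_{ij}. -/
def completeM {c : ℕ} (Mt : Fin (c+1) → Fin c → ℝ) : Fin (c+1) → Fin (c+1) → ℝ :=
  fun i j => if h : (j : ℕ) < c then Mt i ⟨j, h⟩ else 1 - ∑ k, Mt i k

/-- Completion of p̃ ∈ ℝ^{C−1} to p ∈ ℝ^C with p_C = 1 − Σ_{i<C} p_i. -/
def completeV {c : ℕ} (pt : Fin c → ℝ) : Fin (c+1) → ℝ :=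
  fun i => if h : (i : ℕ) < c then pt ⟨i, h⟩ else 1 - ∑ k, pt k

/-- The first C−1 columns of a C×C matrix. -/
def truncM {c : ℕ} (M : Fin (c+1) → Fin (c+1) → ℝ) : Fin (c+1) → Fin c → ℝ :=
  fun i j => M i (Fin.castSucc j)

/-- The first C−1 coordinates of a vector in ℝ^C. -/
def truncV {c : ℕ} (p : Fin (c+1) → ℝ) : Fin c → ℝ := fun i => p (Fin.castSucc i)

/-- The parameter space: θ = (M̃, p̃). -/
abbrev Param (c : ℕ) := (Fin (c+1) → Fin c → ℝ) × (Fin c → ℝ)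

/-- S_d = {x ∈ ℝ^d : x_i ≥ 0, Σ_i x_i ≤ 1}. -/
def Sset (d : ℕ) : Set (Fin d → ℝ) := {x | (∀ i, 0 ≤ x i) ∧ ∑ i, x i ≤ 1}

/-- Θ = (S_{C−1})^C × S_{C−1}. -/
def Theta (c : ℕ) : Set (Param c) := {θ | (∀ i, θ.1 i ∈ Sset c) ∧ θ.2 ∈ Sset c}

/-- ℓ1 distance on the concatenated coordinates of θ. -/
def l1dist {c : ℕ} (θ θ' : Param c) : ℝ :=
  (∑ i, ∑ j, |θ.1 i j - θ'.1 i j|) + ∑ i, |θ.2 i - θ'.2 i|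

/-- The empirical loss f_N(θ), valued in [0,∞]. -/
def fN {c : ℕ} (N n : ℕ) (aU aL bL : ℕ → Fin (c+1) → ℝ) (θ : Param c) : ℝ≥0∞ :=
  ((∑ r ∈ Finset.range N, klDiv (aU r) (mtv (completeM θ.1) (completeV θ.2))) +
    ∑ r ∈ Finset.range n, klDiv (aL r) (mtv (completeM θ.1) (bL r))) / (N : ℝ≥0∞)

/-- The empirical loss f_N(θ), real-valued version (valid near interior points). -/
def fNreal {c : ℕ} (N n : ℕ) (aU aL bL : ℕ → Fin (c+1) → ℝ) (θ : Param c) : ℝ :=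
  ((∑ r ∈ Finset.range N, klReal (aU r) (mtv (completeM θ.1) (completeV θ.2))) +
    ∑ r ∈ Finset.range n, klReal (aL r) (mtv (completeM θ.1) (bL r))) / (N : ℝ)

/-- exp(−x) for x ∈ [0,∞], with exp(−∞) = 0. -/
def expNeg (x : ℝ≥0∞) : ℝ≥0∞ :=
  if x = ⊤ then 0 else ENNReal.ofReal (Real.exp (-x.toReal))

/-- The extended logarithm [0,∞] → [−∞,∞]. -/
def elog (x : ℝ≥0∞) : EReal :=
  if x = 0 then ⊥ else if x = ⊤ then ⊤ else ((Real.log x.toReal : ℝ) : EReal)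

/-- Index set for the coordinates of θ = (M̃, p̃): pairs (i,j) for M̃ entries and i for p̃. -/
abbrev Idx (c : ℕ) := (Fin (c+1) × Fin c) ⊕ Fin c

/-- Coordinates of θ as a vector indexed by `Idx c`. -/
def vecParam {c : ℕ} (θ : Param c) : Idx c → ℝ :=
  Sum.elim (fun ij => θ.1 ij.1 ij.2) (fun i => θ.2 i)

/-- Standard basis vectors of the parameter space, indexed by `Idx c`. -/
def basisP (c : ℕ) : Idx c → Param c :=
  Sum.elim (fun ij => (fun i j => if i = ij.1 ∧ j = ij.2 then 1 else 0, 0))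
    (fun i0 => (0, fun i => if i = i0 then 1 else 0))


open Real InformationTheory Topology

section Simplex

variable {C : ℕ}

lemma le_one_of_mem_simplex {x : Fin C → ℝ} (hx : x ∈ simplex C) (i : Fin C) : x i ≤ 1 :=
  hx.2 ▸ single_le_sum (fun j _ => hx.1 j) (mem_univ i)

lemma mtv_mem_simplex {M : Fin C → Fin C → ℝ} (hM : rowStochastic M) {x : Fin C → ℝ}
    (hx : x ∈ simplex C) : mtv M x ∈ simplex C := by
  refine ⟨fun j => sum_nonneg fun i _ => mul_nonneg (hM.1 i j) (hx.1 i), ?_⟩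
  simp only [mtv]
  rw [sum_comm]
  simp_rw [← sum_mul, hM.2, one_mul]
  exact hx.2

lemma le_mtv {M : Fin C → Fin C → ℝ} {δ : ℝ} (hδ : ∀ i j, δ ≤ M i j) {x : Fin C → ℝ}
    (hx : x ∈ simplex C) (j : Fin C) : δ ≤ mtv M x j :=
  calc δ = ∑ i, δ * x i := by rw [← mul_sum, hx.2, mul_one]
    _ ≤ mtv M x j := sum_le_sum fun i _ => mul_le_mul_of_nonneg_right (hδ i j) (hx.1 i)

lemma continuous_mtv (M : Fin C → Fin C → ℝ) : Continuous (mtv M) := by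
  unfold mtv; fun_prop

lemma mtv_single (M : Fin C → Fin C → ℝ) (i : Fin C) : mtv M (Pi.single i 1) = M i := by
  ext j; simp [mtv, Pi.single_apply]

lemma dist_single_le_of_mem_simplex {x : Fin C → ℝ} (hx : x ∈ simplex C) {i : Fin C} {ε : ℝ}
    (hε : 0 ≤ ε) (hxi : 1 - ε ≤ x i) : dist (Pi.single i 1) x ≤ ε := by
  refine (dist_pi_le_iff hε).2 fun k => ?_
  rw [Real.dist_eq]
  rcases eq_or_ne k i with rfl | hki
  · rw [Pi.single_eq_same, abs_le]
    constructor <;> linarith [le_one_of_mem_simplex hx k]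
  · have hki_sum := add_le_sum (fun j _ => hx.1 j) (mem_univ k) (mem_univ i) hki
    rw [Pi.single_eq_of_ne hki, zero_sub, abs_neg, abs_of_nonneg (hx.1 k)]
    linarith [hx.2]

theorem eq_of_mtv_eq_near_vertices {M M' : Fin C → Fin C → ℝ}
    (h : ∀ i, ∀ ε > (0 : ℝ), ∃ x ∈ simplex C, 1 - ε ≤ x i ∧ mtv M x = mtv M' x) : M = M' := by
  have hclosed : IsClosed {x | mtv M x = mtv M' x} :=
    isClosed_eq (continuous_mtv M) (continuous_mtv M')
  funext i
  have hvertex : Pi.single i 1 ∈ closure {x | mtv M x = mtv M' x} := by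
    refine Metric.mem_closure_iff.2 fun ε hε => ?_
    obtain ⟨x, hx, hxi, hxeq⟩ := h i (ε / 2) (half_pos hε)
    exact ⟨x, hxeq, (dist_single_le_of_mem_simplex hx (half_pos hε).le hxi).trans_lt
      (half_lt_self hε)⟩
  have hrow : mtv M (Pi.single i 1) = mtv M' (Pi.single i 1) := by
    rwa [hclosed.closure_eq] at hvertex
  rwa [mtv_single, mtv_single] at hrow

end Simplex

lemma exists_pos_forall_le {ι : Type*} [Finite ι] {f : ι → ℝ} (hf : ∀ i, 0 < f i) :
    ∃ δ > 0, ∀ i, δ ≤ f i := by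
  have : ∀ᶠ δ in 𝓝[>] (0 : ℝ), ∀ i, δ ≤ f i :=
    eventually_all.2 fun i => eventually_nhdsWithin_of_eventually_nhds (eventually_le_nhds (hf i))
  obtain ⟨δ, hδf, hδ⟩ := (this.and self_mem_nhdsWithin).exists
  exact ⟨δ, hδ, hδf⟩

section KL

variable {C : ℕ} {p q r : Fin C → ℝ}

lemma klReal_eq_sum (p q : Fin C → ℝ) : klReal p q = ∑ j, p j * log (p j / q j) := by
  refine sum_congr rfl fun j _ => ?_
  split_ifs with h <;> simp [h]

lemma klReal_eq_sum_mul_klFun (hp : p ∈ simplex C) (hq : q ∈ simplex C)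
    (hpq : ∀ j, q j = 0 → p j = 0) : klReal p q = ∑ j, q j * klFun (p j / q j) := by
  have hlin : ∑ j, (q j - p j) = 0 := by rw [sum_sub_distrib, hp.2, hq.2, sub_self]
  rw [klReal_eq_sum, ← add_zero (∑ j, _), ← hlin, ← sum_add_distrib]
  refine sum_congr rfl fun j _ => ?_
  by_cases hqj : q j = 0
  · simp [hqj, hpq j hqj]
  · rw [klFun_apply]
    field_simp
    ring

lemma klReal_nonneg (hp : p ∈ simplex C) (hq : q ∈ simplex C)
    (hpq : ∀ j, q j = 0 → p j = 0) : 0 ≤ klReal p q := by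
  rw [klReal_eq_sum_mul_klFun hp hq hpq]
  exact sum_nonneg fun j _ => mul_nonneg (hq.1 j) (klFun_nonneg (div_nonneg (hp.1 j) (hq.1 j)))

lemma eq_of_klReal_eq_zero (hp : p ∈ simplex C) (hq : q ∈ simplex C)
    (hpq : ∀ j, q j = 0 → p j = 0) (h : klReal p q = 0) : p = q := by
  rw [klReal_eq_sum_mul_klFun hp hq hpq, sum_eq_zero_iff_of_nonneg fun j _ =>
    mul_nonneg (hq.1 j) (klFun_nonneg (div_nonneg (hp.1 j) (hq.1 j)))] at h
  funext j
  by_cases hqj : q j = 0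
  · rw [hqj, hpq j hqj]
  · have hkl := (mul_eq_zero.1 (h j (mem_univ j))).resolve_left hqj
    exact (div_eq_one_iff_eq hqj).1 ((klFun_eq_zero_iff (div_nonneg (hp.1 j) (hq.1 j))).1 hkl)

lemma klReal_self (p : Fin C → ℝ) : klReal p p = 0 := by
  rw [klReal_eq_sum]
  refine sum_eq_zero fun j _ => ?_
  by_cases h : p j = 0 <;> simp [h]

lemma klReal_eq_klReal_add (hq : ∀ j, q j ≠ 0) (hr : ∀ j, r j ≠ 0) :
    klReal p r = klReal p q + ∑ j, (log (q j) - log (r j)) * p j := by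
  rw [klReal_eq_sum, klReal_eq_sum, ← sum_add_distrib]
  refine sum_congr rfl fun j _ => ?_
  by_cases hpj : p j = 0
  · simp [hpj]
  · rw [log_div hpj (hr j), log_div hpj (hq j)]
    ring

lemma klReal_le_neg_log (hp : p ∈ simplex C) {δ : ℝ} (hδ : 0 < δ) (hq : ∀ j, δ ≤ q j) :
    klReal p q ≤ -log δ := by
  rw [klReal_eq_sum]
  calc ∑ j, p j * log (p j / q j) ≤ ∑ j, p j * -log δ := by
        refine sum_le_sum fun j _ => ?_
        rcases (hp.1 j).eq_or_lt with h0 | hpos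
        · simp [← h0]
        refine mul_le_mul_of_nonneg_left ?_ hpos.le
        rw [← log_inv]
        refine log_le_log (div_pos hpos (hδ.trans_le (hq j))) ?_
        rw [div_le_iff₀ (hδ.trans_le (hq j))]
        calc p j ≤ 1 := le_one_of_mem_simplex hp j
          _ ≤ δ⁻¹ * q j := by rw [← inv_mul_cancel₀ hδ.ne']; gcongr; exact hq j
    _ = -log δ := by rw [← sum_mul, hp.2, one_mul]

lemma klDiv_eq_ofReal_klReal (hpq : ∀ j, q j = 0 → p j = 0) :
    klDiv p q = ENNReal.ofReal (klReal p q) := by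
  rw [klDiv, if_neg, klReal]
  rintro ⟨j, hpj, hqj⟩
  exact hpj.ne' (hpq j hqj)

lemma eq_zero_of_klDiv_ne_top (hp : ∀ j, 0 ≤ p j) (h : klDiv p q ≠ ⊤) {j : Fin C}
    (hqj : q j = 0) : p j = 0 := by
  by_contra hpj
  exact h (if_pos ⟨j, (hp j).lt_of_ne' hpj, hqj⟩)

lemma eq_of_klDiv_eq_zero (hp : p ∈ simplex C) (hq : q ∈ simplex C) (h : klDiv p q = 0) :
    p = q := by
  have hpq : ∀ j, q j = 0 → p j = 0 := fun j =>
    eq_zero_of_klDiv_ne_top hp.1 (h ▸ ENNReal.zero_ne_top)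
  rw [klDiv_eq_ofReal_klReal hpq, ENNReal.ofReal_eq_zero] at h
  exact eq_of_klReal_eq_zero hp hq hpq (h.antisymm (klReal_nonneg hp hq hpq))

lemma measurable_klReal {Ω : Type*} [MeasurableSpace Ω] {p q : Ω → Fin C → ℝ}
    (hp : Measurable p) (hq : Measurable q) : Measurable fun ω => klReal (p ω) (q ω) := by
  simp_rw [klReal_eq_sum]
  fun_prop

lemma measurable_klDiv {Ω : Type*} [MeasurableSpace Ω] {p q : Ω → Fin C → ℝ}
    (hp : Measurable p) (hq : Measurable q) : Measurable fun ω => klDiv (p ω) (q ω) := by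
  classical
  refine Measurable.ite ?_ measurable_const (measurable_klReal hp hq).ennreal_ofReal
  simp only [Set.ofPred_exists, Set.ofPred_and]
  exact .iUnion fun j =>
    (measurableSet_lt measurable_const ((measurable_pi_apply j).comp hp)).inter
      (measurableSet_eq_fun ((measurable_pi_apply j).comp hq) measurable_const)

end KL

section Integration

variable {Ω α : Type*} [MeasurableSpace Ω] [MeasurableSpace α] {μ : Measure Ω} [IsFiniteMeasure μ]

lemma integral_comp_mul_eq_of_condExp_eq {b : Ω → α} (hb : Measurable b)
    {ψ : α → ℝ} (hψ : Measurable ψ) {f r : Ω → ℝ} (hf : Integrable f μ)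
    (hψf : Integrable (fun ω => ψ (b ω) * f ω) μ)
    (hcond : μ[f | MeasurableSpace.comap b inferInstance] =ᵐ[μ] r) :
    Integrable (fun ω => ψ (b ω) * r ω) μ ∧
      ∫ ω, ψ (b ω) * f ω ∂μ = ∫ ω, ψ (b ω) * r ω ∂μ := by
  have hψb : StronglyMeasurable[MeasurableSpace.comap b inferInstance] (fun ω => ψ (b ω)) :=
    (hψ.comp (comap_measurable b)).stronglyMeasurable
  have hpull : μ[(fun ω => ψ (b ω) * f ω) | MeasurableSpace.comap b inferInstance]
      =ᵐ[μ] fun ω => ψ (b ω) * r ω := by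
    filter_upwards [condExp_mul_of_stronglyMeasurable_left hψb hψf hf, hcond] with ω h1 h2
    exact h1.trans (congrArg _ h2)
  exact ⟨integrable_condExp.congr hpull,
    (integral_condExp hb.comap_le).symm.trans (integral_congr_ae hpull)⟩

lemma measure_preimage_eq_zero_of_condExp_ge {b : Ω → α} (hb : Measurable b)
    {f r : Ω → ℝ} (hf : Integrable f μ)
    (hcond : μ[f | MeasurableSpace.comap b inferInstance] =ᵐ[μ] r) {δ : ℝ} (hδ : 0 < δ)
    (hr : ∀ ω, δ ≤ r ω) {T : Set α} (hT : MeasurableSet T)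
    (hfT : ∀ᵐ ω ∂μ, b ω ∈ T → f ω = 0) : μ (b ⁻¹' T) = 0 := by
  have hint : ∫ ω in b ⁻¹' T, r ω ∂μ = 0 := by
    rw [← setIntegral_congr_ae (hb hT) (hcond.mono fun ω h _ => h),
      setIntegral_condExp hb.comap_le hf ⟨T, hT, rfl⟩]
    exact setIntegral_eq_zero_of_ae_eq_zero hfT
  have hle := setIntegral_ge_of_const_le_real (hb hT) (measure_ne_top μ _) (fun ω _ => hr ω)
    (integrable_condExp.congr hcond).integrableOn
  rw [hint] at hle
  have hreal : μ.real (b ⁻¹' T) = 0 :=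
    le_antisymm (nonpos_of_mul_nonpos_right hle hδ) measureReal_nonneg
  rwa [measureReal_eq_zero_iff] at hreal

lemma integrable_of_integrable_sum_of_le {ι : Type*} [Fintype ι]
    {f : ι → Ω → ℝ} {c : ℝ} (hf : ∀ i, AEStronglyMeasurable (f i) μ) (hc : ∀ i ω, c ≤ f i ω)
    (hsum : Integrable (fun ω => ∑ i, f i ω) μ) (i : ι) : Integrable (f i) μ := by
  have hbound : ∀ ω, ‖f i ω - c‖ ≤ ∑ k, f k ω - Fintype.card ι * c := by
    intro ω
    rw [Real.norm_of_nonneg (sub_nonneg.2 (hc i ω))]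
    calc f i ω - c ≤ ∑ k, (f k ω - c) :=
          single_le_sum (f := fun k => f k ω - c) (fun k _ => sub_nonneg.2 (hc k ω)) (mem_univ i)
      _ = ∑ k, f k ω - Fintype.card ι * c := by simp [sum_sub_distrib]
  have hsub := (hsum.sub (integrable_const _)).mono' ((hf i).sub aestronglyMeasurable_const)
    (Eventually.of_forall hbound)
  simpa using hsub.add (integrable_const c)

end Integration

section PopulationKL

variable {Ω : Type*} [MeasurableSpace Ω] {μ : Measure Ω} {C : ℕ} {p q : Ω → Fin C → ℝ}

lemma ae_eq_zero_of_lintegral_klDiv_ne_top (hp : Measurable p) (hq : Measurable q)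
    (hp0 : ∀ ω j, 0 ≤ p ω j) (h : ∫⁻ ω, klDiv (p ω) (q ω) ∂μ ≠ ⊤) :
    ∀ᵐ ω ∂μ, ∀ j, q ω j = 0 → p ω j = 0 := by
  filter_upwards [ae_lt_top (measurable_klDiv hp hq) h] with ω hω j hj
  exact eq_zero_of_klDiv_ne_top (hp0 ω) hω.ne hj

lemma integrable_klReal_of_lintegral_klDiv_ne_top (hp : Measurable p) (hq : Measurable q)
    (hp_simplex : ∀ ω, p ω ∈ simplex C) (hq_simplex : ∀ ω, q ω ∈ simplex C)
    (h : ∫⁻ ω, klDiv (p ω) (q ω) ∂μ ≠ ⊤) : Integrable (fun ω => klReal (p ω) (q ω)) μ := by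
  have hpq := ae_eq_zero_of_lintegral_klDiv_ne_top hp hq (fun ω => (hp_simplex ω).1) h
  have hnonneg : 0 ≤ᵐ[μ] fun ω => klReal (p ω) (q ω) := by
    filter_upwards [hpq] with ω hω using klReal_nonneg (hp_simplex ω) (hq_simplex ω) hω
  have heq : (fun ω => klDiv (p ω) (q ω)) =ᵐ[μ] fun ω => ENNReal.ofReal (klReal (p ω) (q ω)) := by
    filter_upwards [hpq] with ω hω using klDiv_eq_ofReal_klReal hω
  refine ⟨(measurable_klReal hp hq).aestronglyMeasurable, ?_⟩
  rw [hasFiniteIntegral_iff_ofReal hnonneg, ← lintegral_congr_ae heq]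
  exact h.lt_top

lemma lintegral_klDiv_eq_ofReal_integral (hp_simplex : ∀ ω, p ω ∈ simplex C)
    (hq_simplex : ∀ ω, q ω ∈ simplex C) (hpq : ∀ᵐ ω ∂μ, ∀ j, q ω j = 0 → p ω j = 0)
    (hint : Integrable (fun ω => klReal (p ω) (q ω)) μ) :
    ∫⁻ ω, klDiv (p ω) (q ω) ∂μ = ENNReal.ofReal (∫ ω, klReal (p ω) (q ω) ∂μ) := by
  rw [ofReal_integral_eq_lintegral_ofReal hint]
  · refine lintegral_congr_ae ?_
    filter_upwards [hpq] with ω hω using klDiv_eq_ofReal_klReal hω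
  · filter_upwards [hpq] with ω hω using klReal_nonneg (hp_simplex ω) (hq_simplex ω) hω

lemma lintegral_klDiv_ne_top_of_le [IsFiniteMeasure μ] (hp_simplex : ∀ ω, p ω ∈ simplex C)
    {δ : ℝ} (hδ : 0 < δ) (hq : ∀ ω j, δ ≤ q ω j) : ∫⁻ ω, klDiv (p ω) (q ω) ∂μ ≠ ⊤ := by
  have hbound : ∀ ω, klDiv (p ω) (q ω) ≤ ENNReal.ofReal (-log δ) := fun ω => by
    rw [klDiv_eq_ofReal_klReal fun j hj => absurd hj (hδ.trans_le (hq ω j)).ne']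
    exact ENNReal.ofReal_le_ofReal (klReal_le_neg_log (hp_simplex ω) hδ (hq ω))
  refine ne_top_of_le_ne_top ?_ (lintegral_mono hbound)
  rw [lintegral_const]
  exact ENNReal.mul_ne_top ENNReal.ofReal_ne_top (measure_ne_top μ _)

lemma ae_eq_of_lintegral_klDiv_eq_zero (hp : Measurable p) (hq : Measurable q)
    (hp_simplex : ∀ ω, p ω ∈ simplex C) (hq_simplex : ∀ ω, q ω ∈ simplex C)
    (h : ∫⁻ ω, klDiv (p ω) (q ω) ∂μ = 0) : p =ᵐ[μ] q := by
  filter_upwards [(lintegral_eq_zero_iff (measurable_klDiv hp hq)).1 h] with ω hω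
  exact eq_of_klDiv_eq_zero (hp_simplex ω) (hq_simplex ω) hω

end PopulationKL

lemma log_le_sub_log_mul {δ x y t : ℝ} (hδ : 0 < δ) (hδx : δ ≤ x) (hx : x ≤ 1) (hy0 : 0 ≤ y)
    (hy1 : y ≤ 1) (ht0 : 0 ≤ t) (ht1 : t ≤ 1) : log δ ≤ (log x - log y) * t := by
  have hlogδ := log_le_log hδ hδx
  have hlogx := log_nonpos (hδ.le.trans hδx) hx
  have hlogy := log_nonpos hy0 hy1
  nlinarith

section Pythagoras

variable {Ω α : Type*} [MeasurableSpace Ω] [MeasurableSpace α] {μ : Measure Ω} [IsFiniteMeasure μ]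
  {C : ℕ} {a : Ω → Fin C → ℝ} {b : Ω → α} {g h : α → Fin C → ℝ}

lemma integrable_apply_of_mem_simplex (ha : Measurable a) (ha_simplex : ∀ ω, a ω ∈ simplex C)
    (j : Fin C) : Integrable (fun ω => a ω j) μ :=
  .of_bound (by fun_prop : Measurable fun ω => a ω j).aestronglyMeasurable 1 <|
    ae_of_all _ fun ω => by
      rw [Real.norm_of_nonneg ((ha_simplex ω).1 j)]
      exact le_one_of_mem_simplex (ha_simplex ω) j

lemma integral_klReal_eq_add_of_condExp_eq (ha : Measurable a) (hb : Measurable b)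
    (hg : Measurable g) (hh : Measurable h) (ha_simplex : ∀ ω, a ω ∈ simplex C)
    (hg_simplex : ∀ ω, g (b ω) ∈ simplex C) (hh_simplex : ∀ ω, h (b ω) ∈ simplex C)
    {δ : ℝ} (hδ : 0 < δ) (hgδ : ∀ ω j, δ ≤ g (b ω) j)
    (hcond : ∀ j, μ[fun ω => a ω j | MeasurableSpace.comap b inferInstance]
      =ᵐ[μ] fun ω => g (b ω) j)
    (hh0 : ∀ᵐ ω ∂μ, ∀ j, h (b ω) j ≠ 0)
    (hF : Integrable (fun ω => klReal (a ω) (g (b ω))) μ)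
    (hG : Integrable (fun ω => klReal (a ω) (h (b ω))) μ) :
    Integrable (fun ω => klReal (g (b ω)) (h (b ω))) μ ∧
      ∫ ω, klReal (a ω) (h (b ω)) ∂μ =
        ∫ ω, klReal (a ω) (g (b ω)) ∂μ + ∫ ω, klReal (g (b ω)) (h (b ω)) ∂μ := by
  set ψ : Fin C → α → ℝ := fun j x => log (g x j) - log (h x j)
  have hψm : ∀ j, Measurable (ψ j) := fun j => by fun_prop
  have hg0 : ∀ ω j, g (b ω) j ≠ 0 := fun ω j => (hδ.trans_le (hgδ ω j)).ne'
  have hGF : (fun ω => klReal (a ω) (h (b ω)) - klReal (a ω) (g (b ω)))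
      =ᵐ[μ] fun ω => ∑ j, ψ j (b ω) * a ω j := by
    filter_upwards [hh0] with ω hω
    rw [klReal_eq_klReal_add (hg0 ω) hω, add_sub_cancel_left]
  have hK : (fun ω => klReal (g (b ω)) (h (b ω)))
      =ᵐ[μ] fun ω => ∑ j, ψ j (b ω) * g (b ω) j := by
    filter_upwards [hh0] with ω hω
    rw [klReal_eq_klReal_add (hg0 ω) hω, klReal_self, zero_add]
  -- Each summand is at least `log δ`, so integrability of the sum passes to the summands.
  have hψa : ∀ j, Integrable (fun ω => ψ j (b ω) * a ω j) μ :=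
    integrable_of_integrable_sum_of_le (f := fun j ω => ψ j (b ω) * a ω j) (c := log δ)
      (fun j => by fun_prop)
      (fun j ω => log_le_sub_log_mul hδ (hgδ ω j) (le_one_of_mem_simplex (hg_simplex ω) j)
        ((hh_simplex ω).1 j) (le_one_of_mem_simplex (hh_simplex ω) j) ((ha_simplex ω).1 j)
        (le_one_of_mem_simplex (ha_simplex ω) j))
      ((hG.sub hF).congr hGF)
  have htower := fun j => integral_comp_mul_eq_of_condExp_eq hb (hψm j)
    (integrable_apply_of_mem_simplex ha ha_simplex j) (hψa j) (hcond j)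
  refine ⟨(integrable_finsetSum _ fun j _ => (htower j).1).congr hK.symm, ?_⟩
  calc ∫ ω, klReal (a ω) (h (b ω)) ∂μ
      = ∫ ω, klReal (a ω) (g (b ω)) ∂μ
        + ∫ ω, (klReal (a ω) (h (b ω)) - klReal (a ω) (g (b ω))) ∂μ := by
        rw [integral_sub hG hF]; ring
    _ = ∫ ω, klReal (a ω) (g (b ω)) ∂μ + ∑ j, ∫ ω, ψ j (b ω) * a ω j ∂μ := by
        rw [integral_congr_ae hGF, integral_finsetSum _ fun j _ => hψa j]
    _ = ∫ ω, klReal (a ω) (g (b ω)) ∂μ + ∫ ω, klReal (g (b ω)) (h (b ω)) ∂μ := by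
        rw [integral_congr_ae hK, integral_finsetSum _ fun j _ => (htower j).1]
        simp_rw [(htower _).2]

theorem lintegral_klDiv_eq_add_of_condExp_eq (ha : Measurable a) (hb : Measurable b)
    (hg : Measurable g) (hh : Measurable h) (ha_simplex : ∀ ω, a ω ∈ simplex C)
    (hg_simplex : ∀ ω, g (b ω) ∈ simplex C) (hh_simplex : ∀ ω, h (b ω) ∈ simplex C)
    {δ : ℝ} (hδ : 0 < δ) (hgδ : ∀ ω j, δ ≤ g (b ω) j)
    (hcond : ∀ j, μ[fun ω => a ω j | MeasurableSpace.comap b inferInstance]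
      =ᵐ[μ] fun ω => g (b ω) j)
    (hfin : ∫⁻ ω, klDiv (a ω) (h (b ω)) ∂μ ≠ ⊤) :
    ∫⁻ ω, klDiv (a ω) (h (b ω)) ∂μ =
      ∫⁻ ω, klDiv (a ω) (g (b ω)) ∂μ + ∫⁻ ω, klDiv (g (b ω)) (h (b ω)) ∂μ := by
  have hgb : Measurable fun ω => g (b ω) := hg.comp hb
  have hhb : Measurable fun ω => h (b ω) := hh.comp hb
  have hg0 : ∀ ω j, g (b ω) j ≠ 0 := fun ω j => (hδ.trans_le (hgδ ω j)).ne'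
  have hah := ae_eq_zero_of_lintegral_klDiv_ne_top ha hhb (fun ω => (ha_simplex ω).1) hfin
  have hh0 : ∀ᵐ ω ∂μ, ∀ j, h (b ω) j ≠ 0 := ae_all_iff.2 fun j =>
    measure_eq_zero_iff_ae_notMem.1 <| measure_preimage_eq_zero_of_condExp_ge hb
      (integrable_apply_of_mem_simplex ha ha_simplex j) (hcond j) hδ (fun ω => hgδ ω j)
      (T := {x | h x j = 0}) (measurableSet_eq_fun (by fun_prop) measurable_const)
      (hah.mono fun ω hω => hω j)
  have hF := integrable_klReal_of_lintegral_klDiv_ne_top ha hgb ha_simplex hg_simplex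
    (lintegral_klDiv_ne_top_of_le (μ := μ) ha_simplex hδ hgδ)
  have hG := integrable_klReal_of_lintegral_klDiv_ne_top ha hhb ha_simplex hh_simplex hfin
  obtain ⟨hK, hsum⟩ := integral_klReal_eq_add_of_condExp_eq ha hb hg hh ha_simplex hg_simplex
    hh_simplex hδ hgδ hcond hh0 hF hG
  have hag : ∀ᵐ ω ∂μ, ∀ j, g (b ω) j = 0 → a ω j = 0 :=
    ae_of_all _ fun ω j hj => absurd hj (hg0 ω j)
  have hgh : ∀ᵐ ω ∂μ, ∀ j, h (b ω) j = 0 → g (b ω) j = 0 :=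
    hh0.mono fun ω hω j hj => absurd hj (hω j)
  rw [lintegral_klDiv_eq_ofReal_integral ha_simplex hh_simplex hah hG,
    lintegral_klDiv_eq_ofReal_integral ha_simplex hg_simplex hag hF,
    lintegral_klDiv_eq_ofReal_integral hg_simplex hh_simplex hgh hK, hsum, ENNReal.ofReal_add]
  · exact integral_nonneg fun ω => klReal_nonneg (ha_simplex ω) (hg_simplex ω) fun j hj =>
      absurd hj (hg0 ω j)
  · exact integral_nonneg_of_ae <| hgh.mono fun ω hω =>
      klReal_nonneg (hg_simplex ω) (hh_simplex ω) hω

end Pythagoras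

lemma eq_of_ae_mtv_eq {Ω : Type*} [MeasurableSpace Ω] {μ : Measure Ω} {C : ℕ}
    {b : Ω → Fin C → ℝ} (hb_simplex : ∀ ω, b ω ∈ simplex C)
    (hpos : ∀ i : Fin C, ∀ ε > (0 : ℝ), 0 < μ {ω | 1 - ε ≤ b ω i}) {M M' : Fin C → Fin C → ℝ}
    (h : ∀ᵐ ω ∂μ, mtv M (b ω) = mtv M' (b ω)) : M = M' :=
  eq_of_mtv_eq_near_vertices fun i ε hε => by
    obtain ⟨ω, hωi, hω⟩ :=
      Measure.exists_mem_of_measure_ne_zero_of_ae (hpos i ε hε).ne' (ae_restrict_of_ae h)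
    exact ⟨b ω, hb_simplex ω, hωi, hω⟩

theorem stmt5_general {Ωs : Type*} [MeasurableSpace Ωs] (μ : Measure Ωs) [IsProbabilityMeasure μ]
    {C : ℕ}
    (a b : Ωs → Fin C → ℝ) (ha_meas : Measurable a) (hb_meas : Measurable b)
    (ha_simplex : ∀ ω, a ω ∈ simplex C) (hb_simplex : ∀ ω, b ω ∈ simplex C)
    (M0 : Fin C → Fin C → ℝ) (hM0 : rowStochastic M0) (hM0pos : ∀ i j, 0 < M0 i j)
    (hcond : ∀ j, μ[(fun ω => a ω j) | MeasurableSpace.comap b inferInstance]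
      =ᵐ[μ] fun ω => mtv M0 (b ω) j)
    (hpos : ∀ i : Fin C, ∀ ε > (0 : ℝ), 0 < μ {ω | 1 - ε ≤ b ω i})
    (M : Fin C → Fin C → ℝ) (hM : rowStochastic M) (hMne : M ≠ M0) :
    ∫⁻ ω, klDiv (a ω) (mtv M0 (b ω)) ∂μ < ∫⁻ ω, klDiv (a ω) (mtv M (b ω)) ∂μ := by
  obtain ⟨δ, hδ, hδM0⟩ : ∃ δ > 0, ∀ ij : Fin C × Fin C, δ ≤ M0 ij.1 ij.2 :=
    exists_pos_forall_le fun ij => hM0pos ij.1 ij.2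
  have hq0δ : ∀ ω j, δ ≤ mtv M0 (b ω) j := fun ω =>
    le_mtv (fun i j => hδM0 (i, j)) (hb_simplex ω)
  have hq0 := fun ω => mtv_mem_simplex hM0 (hb_simplex ω)
  have hq1 := fun ω => mtv_mem_simplex hM (hb_simplex ω)
  have hfin0 : ∫⁻ ω, klDiv (a ω) (mtv M0 (b ω)) ∂μ ≠ ⊤ :=
    lintegral_klDiv_ne_top_of_le ha_simplex hδ hq0δ
  by_cases hfin : ∫⁻ ω, klDiv (a ω) (mtv M (b ω)) ∂μ = ⊤
  · exact hfin ▸ hfin0.lt_top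
  have hM0m := (continuous_mtv M0).measurable
  have hMm := (continuous_mtv M).measurable
  rw [lintegral_klDiv_eq_add_of_condExp_eq ha_meas hb_meas hM0m hMm ha_simplex hq0 hq1 hδ hq0δ
    hcond hfin]
  refine ENNReal.lt_add_right hfin0 fun hzero => hMne ?_
  exact (eq_of_ae_mtv_eq hb_simplex hpos
    (ae_eq_of_lintegral_klDiv_eq_zero (hM0m.comp hb_meas) (hMm.comp hb_meas) hq0 hq1 hzero)).symm

/-- under E[a|b] = (M⁰)'b a.s. (M⁰ row-stochastic, strictly positive entries) and
Assumption 1 (positivity) on b, M⁰ is the unique minimizer of the population labeled loss: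
for every row-stochastic M ≠ M⁰, E[D_KL(a ‖ M'b)] > E[D_KL(a ‖ (M⁰)'b)] in [0,∞]. -/
theorem stmt5 {Ωs : Type*} [MeasurableSpace Ωs] (μ : Measure Ωs) [IsProbabilityMeasure μ]
    {C : ℕ} (hC : 2 ≤ C)
    (a b : Ωs → Fin C → ℝ) (ha_meas : Measurable a) (hb_meas : Measurable b)
    (ha_simplex : ∀ ω, a ω ∈ simplex C) (hb_simplex : ∀ ω, b ω ∈ simplex C)
    (M0 : Fin C → Fin C → ℝ) (hM0 : rowStochastic M0) (hM0pos : ∀ i j, 0 < M0 i j)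
    (hcond : ∀ j, μ[(fun ω => a ω j) | MeasurableSpace.comap b inferInstance]
      =ᵐ[μ] fun ω => mtv M0 (b ω) j)
    (hpos : ∀ i : Fin C, ∀ ε > (0 : ℝ), 0 < μ {ω | 1 - ε ≤ b ω i})
    (M : Fin C → Fin C → ℝ) (hM : rowStochastic M) (hMne : M ≠ M0) :
    ∫⁻ ω, klDiv (a ω) (mtv M0 (b ω)) ∂μ < ∫⁻ ω, klDiv (a ω) (mtv M (b ω)) ∂μ :=
  stmt5_general μ a b ha_meas hb_meas ha_simplex hb_simplex M0 hM0 hM0pos hcond hpos M hM hMne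

end GBQL
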